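/- Let d ≥ 2 be an integer and ε_1 ≥ … ≥ ε_d ≥ 0 reals with ε_{d+1} = 0, and let V > 0 satisfy V ≤ d!·vol(□(ε_1,…,ε_d)), where □(t_1,…,t_d) = {x ∈ ℝ_{≥0}^d : ∑_{i=j}^d x_i ≤ t_j for all j}. Then max_{1≤i≤d}(ε_i − ε_{i+1}) ≥ ((d+1)V)^{1/d}/(d+1). -/

import Mathlib

/-!
Let `θ` be the largest gap `ε i - ε (i + 1)`. Telescoping from `ε (d + 1) = 0` gives
`ε (j + 1) ≤ (d - j) θ`, so the polytope lies in the one with the arithmetic profile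
`t_j = (d - 1 - j) θ + θ`. Slicing off the last coordinate at height `s` leaves a polytope of one
dimension less whose profile is again arithmetic with offset `θ + a - s`; hence its volume
`v_d(a)` satisfies `v_{d+1}(a) = ∫₀ᵃ v_d(θ + a - s) ds`, which is solved by
`v_d(a) = a (a + d θ)^(d-1) / d!`. So `V ≤ θ ((d + 1) θ)^(d-1)`, i.e. `(d + 1) V ≤ ((d + 1) θ)^d`.
-/

open MeasureTheory Finset
open scoped Nat

-- The paper's `□(t_1, …, t_d)`, indexed from `0`: `t j` here is the paper's `t_{j+1}`.
def stairPolytope {d : ℕ} (t : Fin d → ℝ) : Set (Fin d → ℝ) :=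
  {x | (∀ i, 0 ≤ x i) ∧ ∀ j, ∑ i ∈ univ.filter (fun i => j ≤ i), x i ≤ t j}

section

variable {d : ℕ}

theorem measurableSet_stairPolytope (t : Fin d → ℝ) : MeasurableSet (stairPolytope t) := by
  simp only [stairPolytope, Set.ofPred_and, Set.ofPred_forall]
  exact (MeasurableSet.iInter fun i =>
      measurableSet_le measurable_const (measurable_pi_apply i)).inter
    (MeasurableSet.iInter fun j => measurableSet_le (by fun_prop) measurable_const)

theorem stairPolytope_mono {t t' : Fin d → ℝ} (h : t ≤ t') : stairPolytope t ⊆ stairPolytope t' :=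
  fun _ hx => ⟨hx.1, fun j => (hx.2 j).trans (h j)⟩

theorem stairPolytope_fin_zero (t : Fin 0 → ℝ) : stairPolytope t = Set.univ := by
  ext x; simp [stairPolytope]

theorem snoc_mem_stairPolytope_iff (t : Fin (d + 1) → ℝ) (y : Fin d → ℝ) (s : ℝ) :
    Fin.snoc (α := fun _ => ℝ) y s ∈ stairPolytope t ↔
      (0 ≤ s ∧ s ≤ t (Fin.last d)) ∧ y ∈ stairPolytope fun k => t k.castSucc - s := by
  have sum_last : ∀ x : Fin (d + 1) → ℝ,
      ∑ i ∈ univ.filter (fun i => Fin.last d ≤ i), x i = x (Fin.last d) := by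
    intro x
    rw [show univ.filter (fun i => Fin.last d ≤ i) = {Fin.last d} by ext; simp [Fin.last_le_iff]]
    exact sum_singleton _ _
  have sum_castSucc : ∀ k : Fin d,
      ∑ i ∈ univ.filter (fun i => k.castSucc ≤ i), Fin.snoc (α := fun _ => ℝ) y s i
        = ∑ i ∈ univ.filter (fun i => k ≤ i), y i + s := by
    intro k
    rw [sum_filter, sum_filter, Fin.sum_univ_castSucc]
    simp [Fin.le_last]
  simp only [stairPolytope, Set.mem_ofPred_eq, Fin.forall_fin_succ', Fin.snoc_castSucc,
    Fin.snoc_last, sum_last, sum_castSucc, le_sub_iff_add_le]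
  tauto

theorem volume_stairPolytope_succ (t : Fin (d + 1) → ℝ) :
    volume (stairPolytope t) =
      ∫⁻ s in Set.Icc 0 (t (Fin.last d)), volume (stairPolytope fun k => t k.castSucc - s) := by
  let e := MeasurableEquiv.piFinSuccAbove (fun _ : Fin (d + 1) => ℝ) (Fin.last d)
  have he := (volume_preserving_piFinSuccAbove (fun _ : Fin (d + 1) => ℝ) (Fin.last d)).symm e
  rw [← he.measure_preimage_equiv, Measure.volume_eq_prod,
    Measure.prod_apply ((measurableSet_stairPolytope t).preimage e.symm.measurable),
    ← lintegral_indicator measurableSet_Icc]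
  congr 1 with s
  have slice : Prod.mk s ⁻¹' (e.symm ⁻¹' stairPolytope t) =
      {y | Fin.snoc (α := fun _ => ℝ) y s ∈ stairPolytope t} := by
    ext y
    simp only [e, Set.mem_preimage, MeasurableEquiv.piFinSuccAbove_symm_apply,
      Fin.insertNthEquiv_last]
    rfl
  by_cases hs : s ∈ Set.Icc 0 (t (Fin.last d))
  · simp only [Set.indicator_of_mem hs, slice, snoc_mem_stairPolytope_iff, Set.mem_Icc.1 hs,
      true_and, Set.ofPred_mem_eq]
  · simp only [Set.indicator_of_notMem hs, slice, snoc_mem_stairPolytope_iff, ← Set.mem_Icc, hs,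
      false_and, Set.ofPred_false, measure_empty]

end

-- `stairVolume n θ a` is the volume of `□_{n+1}(a, θ)`; the dimension is `n + 1` so that no
-- truncated `d - 1` appears in the exponent.
noncomputable def stairVolume (n : ℕ) (θ a : ℝ) : ℝ := a * (a + (n + 1) * θ) ^ n / (n + 1)!

theorem stairVolume_nonneg (n : ℕ) {θ a : ℝ} (hθ : 0 ≤ θ) (ha : 0 ≤ a) :
    0 ≤ stairVolume n θ a := by
  unfold stairVolume; positivity

theorem continuous_stairVolume (n : ℕ) (θ : ℝ) : Continuous (stairVolume n θ) := by
  unfold stairVolume; fun_prop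

theorem hasDerivAt_stairVolume_succ (n : ℕ) (θ a : ℝ) :
    HasDerivAt (stairVolume (n + 1) θ) (stairVolume n θ (a + θ)) a := by
  have hfun : stairVolume (n + 1) θ = fun x => x * (x + (n + 2) * θ) ^ (n + 1) / (n + 2)! := by
    funext x; simp only [stairVolume]; push_cast; ring_nf
  rw [hfun]
  refine (((hasDerivAt_id' a).fun_mul
    (((hasDerivAt_id' a).add_const ((n + 2) * θ)).fun_pow (n + 1))).div_const _).congr_deriv ?_
  simp only [stairVolume, Nat.factorial_succ (n + 1), Nat.add_sub_cancel]
  push_cast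
  field_simp
  ring

theorem integral_stairVolume (n : ℕ) (θ a : ℝ) :
    ∫ s in 0..a, stairVolume n θ (θ + a - s) = stairVolume (n + 1) θ a := by
  have hderiv : ∀ s, HasDerivAt (fun s => -stairVolume (n + 1) θ (a - s))
      (stairVolume n θ (θ + a - s)) s := by
    intro s
    refine (((hasDerivAt_stairVolume_succ n θ (a - s)).comp s
      ((hasDerivAt_id' s).const_sub a)).neg).congr_deriv ?_
    rw [mul_neg_one, neg_neg, add_comm, add_sub_assoc]
  have hcont : Continuous fun s => stairVolume n θ (θ + a - s) :=
    (continuous_stairVolume n θ).comp (by fun_prop)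
  rw [intervalIntegral.integral_eq_sub_of_hasDerivAt (fun s _ => hderiv s)
    (hcont.intervalIntegrable _ _)]
  simp [stairVolume]

theorem volume_stairPolytope_arithmetic (n : ℕ) {θ a : ℝ} (hθ : 0 ≤ θ) (ha : 0 ≤ a) :
    volume (stairPolytope fun j : Fin (n + 1) => ((n : ℝ) - (j : ℕ)) * θ + a) =
      ENNReal.ofReal (stairVolume n θ a) := by
  induction n generalizing a with
  | zero => rw [volume_stairPolytope_succ]; simp [stairPolytope_fin_zero, stairVolume, volume_pi]
  | succ n ih =>
    have hslice : Set.EqOn (fun s => volume (stairPolytope fun k : Fin (n + 1) =>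
        (((n + 1 : ℕ) : ℝ) - (k.castSucc : ℕ)) * θ + a - s))
        (fun s => ENNReal.ofReal (stairVolume n θ (θ + a - s))) (Set.Icc 0 a) := by
      intro s hs
      dsimp only
      rw [← ih (by linarith [hs.2])]
      congr with k
      push_cast [Fin.val_castSucc]
      ring
    have hnonneg : ∀ s ∈ Set.Icc 0 a, 0 ≤ stairVolume n θ (θ + a - s) :=
      fun s hs => stairVolume_nonneg n hθ (by linarith [hs.2])
    have hcont : Continuous fun s => stairVolume n θ (θ + a - s) :=
      (continuous_stairVolume n θ).comp (by fun_prop)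
    rw [volume_stairPolytope_succ]
    simp only [Fin.val_last, sub_self, zero_mul, zero_add]
    rw [setLIntegral_congr_fun measurableSet_Icc hslice,
      ← ofReal_integral_eq_lintegral_ofReal hcont.integrableOn_Icc
        (ae_restrict_of_forall_mem measurableSet_Icc hnonneg),
      integral_Icc_eq_integral_Ioc, ← intervalIntegral.integral_of_le ha, integral_stairVolume]

theorem Finset.le_ciSup_of_mem {ι α : Type*} [ConditionallyCompleteLattice α] {s : Finset ι}
    (f : ι → α) {i : ι} (hi : i ∈ s) : f i ≤ ⨆ j ∈ s, f j :=
  le_ciSup₂ (f := fun j _ => f j) ((s.finite_toSet.image f).bddAbove.mono <| by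
    rintro _ ⟨_, ⟨j, rfl⟩, hj, rfl⟩
    exact ⟨j, hj, rfl⟩) i hi

theorem sub_le_mul_of_forall_sub_succ_le (ε : ℕ → ℝ) {θ : ℝ} {i m : ℕ} (him : i ≤ m)
    (h : ∀ k, i ≤ k → k < m → ε k - ε (k + 1) ≤ θ) : ε i - ε m ≤ (m - i : ℕ) * θ := by
  induction m, him using Nat.le_induction with
  | base => simp
  | succ m him ih =>
    have hstep := h m him m.lt_succ_self
    have ih := ih fun k hik hkm => h k hik (hkm.trans m.lt_succ_self)
    rw [Nat.succ_sub him]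
    push_cast
    linarith

theorem stmt_11_general (d : ℕ) (hd : 2 ≤ d) (ε : ℕ → ℝ)
    (hnn : 0 ≤ ε d) (hlast : ε (d + 1) = 0)
    (V : ℝ) (hV : 0 < V)
    (hvol : V ≤ (d.factorial : ℝ) *
      (volume {x : Fin d → ℝ | (∀ i, 0 ≤ x i) ∧
        ∀ j : Fin d, ∑ i ∈ Finset.univ.filter (fun i => j ≤ i), x i ≤ ε ((j : ℕ) + 1)}).toReal) :
    (⨆ i ∈ Finset.Icc 1 d, (ε i - ε (i + 1)))
      ≥ (((d : ℝ) + 1) * V) ^ ((1 : ℝ) / d) / ((d : ℝ) + 1) := by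
  set θ := ⨆ i ∈ Finset.Icc 1 d, (ε i - ε (i + 1))
  have hgap : ∀ i ∈ Finset.Icc 1 d, ε i - ε (i + 1) ≤ θ := fun i hi =>
    Finset.le_ciSup_of_mem (fun i => ε i - ε (i + 1)) hi
  have hθ : 0 ≤ θ := by linarith [hgap d (by simp; omega)]
  obtain ⟨n, rfl⟩ : ∃ n, d = n + 1 := ⟨d - 1, by omega⟩
  have hprofile : (fun j : Fin (n + 1) => ε ((j : ℕ) + 1)) ≤
      fun j : Fin (n + 1) => ((n : ℝ) - (j : ℕ)) * θ + θ := by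
    intro j
    have := sub_le_mul_of_forall_sub_succ_le ε (i := j + 1) (m := n + 1 + 1) (by omega)
      fun k hk hk' => hgap k (by simp; omega)
    rw [hlast, Nat.cast_sub (by omega)] at this
    push_cast at this
    linarith
  have hvolume : (volume (stairPolytope fun j : Fin (n + 1) => ε ((j : ℕ) + 1))).toReal ≤
      stairVolume n θ θ :=
    ENNReal.toReal_le_of_le_ofReal (stairVolume_nonneg n hθ hθ)
      ((measure_mono (stairPolytope_mono hprofile)).trans_eq
        (volume_stairPolytope_arithmetic n hθ hθ))
  have hpow : ((n + 1 : ℕ) + 1 : ℝ) * V ≤ (((n + 1 : ℕ) + 1 : ℝ) * θ) ^ (n + 1) := by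
    have : V ≤ θ * (((n + 1 : ℕ) + 1 : ℝ) * θ) ^ n :=
      calc V ≤ (n + 1)! * stairVolume n θ θ := hvol.trans (by gcongr; exact hvolume)
        _ = θ * (((n + 1 : ℕ) + 1 : ℝ) * θ) ^ n := by
          simp only [stairVolume]; push_cast; field_simp; ring
    rw [pow_succ', mul_assoc]
    exact mul_le_mul_of_nonneg_left this (by positivity)
  rw [ge_iff_le, div_le_iff₀' (by positivity), one_div,
    Real.rpow_inv_le_iff_of_pos (by positivity) (by positivity) (by positivity), Real.rpow_natCast]
  exact hpow

theorem stmt_11 (d : ℕ) (hd : 2 ≤ d) (ε : ℕ → ℝ)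
    (hdec : ∀ i, 1 ≤ i → i < d → ε (i + 1) ≤ ε i)
    (hnn : 0 ≤ ε d) (hlast : ε (d + 1) = 0)
    (V : ℝ) (hV : 0 < V)
    (hvol : V ≤ (d.factorial : ℝ) *
      (volume {x : Fin d → ℝ | (∀ i, 0 ≤ x i) ∧
        ∀ j : Fin d, ∑ i ∈ Finset.univ.filter (fun i => j ≤ i), x i ≤ ε ((j : ℕ) + 1)}).toReal) :
    (⨆ i ∈ Finset.Icc 1 d, (ε i - ε (i + 1)))
      ≥ (((d : ℝ) + 1) * V) ^ ((1 : ℝ) / d) / ((d : ℝ) + 1) :=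
  stmt_11_general d hd ε hnn hlast V hV hvol
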